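/- Let Ω ⊆ ℝⁿ be a bounded open convex set and f : ℝⁿ → ℝ a function convex on Ω. Let q be such that inf_{p ∈ ℝⁿ} f(p) < f(q) and {p : f(p) ≤ f(q)} ⊆ Ω, assume the minimizer set U* = {p : f(p) = inf_{x ∈ ℝⁿ} f(x)} is nonempty, and fix c ∈ (inf f, f(q)). Then there exists δ > 0 such that for every p ∈ {p : f(p) ≤ f(q)} \ {p : f(p) ≤ c} and every subgradient s of f at p, one has ‖s‖ > δ; in fact, for any fixed p* ∈ U*, δ = (c − f(p*))/ε works, where ε = sup{ ‖p* − p‖ : p* ∈ U*, p ∈ {f ≤ f(q)} \ {f ≤ c} }. -/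

import Mathlib

open scoped RealInnerProductSpace

/-!
Comparing the subgradient inequality at `p` with a minimiser `p*` gives
`c - f p* < f p - f p* ≤ ⟪s, p - p*⟫ ≤ ‖s‖ ‖p - p*‖`, and `‖p - p*‖` is at most the `ε` of the
statement, which is finite because both points lie in the bounded set `Ω`.
-/

theorem div_lt_norm_of_subgradient {E : Type*} [NormedAddCommGroup E] [InnerProductSpace ℝ E]
    {f : E → ℝ} {p y s : E} {c ε : ℝ} (hs : f p + ⟪s, y - p⟫ ≤ f y) (hy : f y < c)
    (hp : c < f p) (hε : ‖y - p‖ ≤ ε) : (c - f y) / ε < ‖s‖ := by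
  have hyp : 0 < ‖y - p‖ := norm_pos_iff.2 (sub_ne_zero.2 (ne_of_apply_ne f (hy.trans hp).ne))
  rw [div_lt_iff₀ (hyp.trans_le hε)]
  calc c - f y < -⟪s, y - p⟫ := by linarith
    _ ≤ ‖s‖ * ‖y - p‖ := by
      rw [← inner_neg_right, ← norm_neg (y - p)]
      exact real_inner_le_norm _ _
    _ ≤ ‖s‖ * ε := by gcongr

theorem stmt_9 {n : ℕ} (Ω : Set (EuclideanSpace ℝ (Fin n))) (hΩb : Bornology.IsBounded Ω)
    (f : EuclideanSpace ℝ (Fin n) → ℝ)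
    (q : EuclideanSpace ℝ (Fin n))
    (hq2 : {p | f p ≤ f q} ⊆ Ω)
    (hU : {p : EuclideanSpace ℝ (Fin n) | ∀ x, f p ≤ f x}.Nonempty)
    (c : ℝ) (hc1 : ∀ p ∈ {p : EuclideanSpace ℝ (Fin n) | ∀ x, f p ≤ f x}, f p < c) :
    (∃ δ > 0, ∀ p, f p ≤ f q → ¬ f p ≤ c →
      ∀ s, (∀ y ∈ Ω, f p + ⟪s, y - p⟫ ≤ f y) → δ < ‖s‖) ∧
    ∀ pstar ∈ {p : EuclideanSpace ℝ (Fin n) | ∀ x, f p ≤ f x},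
      ∀ p, f p ≤ f q → ¬ f p ≤ c →
        ∀ s, (∀ y ∈ Ω, f p + ⟪s, y - p⟫ ≤ f y) →
          (c - f pstar) /
              sSup {r | ∃ p' ∈ {p : EuclideanSpace ℝ (Fin n) | ∀ x, f p ≤ f x},
                ∃ z, f z ≤ f q ∧ ¬ f z ≤ c ∧ r = ‖p' - z‖} < ‖s‖ := by
  have norm_sub_le_diam {x z} (hx : x ∈ Ω) (hz : z ∈ Ω) : ‖x - z‖ ≤ Metric.diam Ω := by
    simpa only [dist_eq_norm] using Metric.dist_le_diam_of_mem hΩb hx hz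
  have minimizer_mem {p} (hp : ∀ x, f p ≤ f x) : p ∈ Ω := hq2 (hp q)
  refine ⟨?_, ?_⟩
  · obtain ⟨pstar, hpstar⟩ := hU
    refine ⟨(c - f pstar) / (Metric.diam Ω + 1),
      div_pos (sub_pos.2 (hc1 _ hpstar)) (by positivity), fun p hp hpc s hs => ?_⟩
    exact div_lt_norm_of_subgradient (hs _ (minimizer_mem hpstar)) (hc1 _ hpstar)
      (not_le.1 hpc) ((norm_sub_le_diam (minimizer_mem hpstar) (hq2 hp)).trans (by linarith))
  · intro pstar hpstar p hp hpc s hs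
    refine div_lt_norm_of_subgradient (hs _ (minimizer_mem hpstar)) (hc1 _ hpstar)
      (not_le.1 hpc) (le_csSup ⟨Metric.diam Ω, ?_⟩ ⟨pstar, hpstar, p, hp, hpc, rfl⟩)
    rintro _ ⟨p', hp', z, hz, -, rfl⟩
    exact norm_sub_le_diam (minimizer_mem hp') (hq2 hz)
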